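/- Let Z̃ ~ Binom(M, p). For 0 < l ≤ M and integer shifts Δ with 1 ≤ Δ < l, and for any k ∈ {0,...,M-Δ-1} and α ∈ [P(Z̃<k), P(Z̃≤k)], the quantity J(Δ,k,α) = P(Z̃ ≥ k+Δ) + (P(Z̃=k+Δ)/P(Z̃=k))·(P(Z̃<k) - α) is strictly decreasing in Δ, i.e., J(Δ+1,k,α) < J(Δ,k,α). -/

import Mathlib

/-!
Write `c = P(Z̃ < k) - α ∈ [-P(Z̃ = k), 0]` and `t = -c / P(Z̃ = k) ∈ [0, 1]`. Peeling the atom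
`P(Z̃ = k + Δ)` off the tail `P(Z̃ ≥ k + Δ)` gives
`J(Δ, k, α) - J(Δ + 1, k, α) = (1 - t) P(Z̃ = k + Δ) + t P(Z̃ = k + Δ + 1)`,
a convex combination of two positive binomial weights.
-/

/-- The binomial probability mass function `P(Binom(M,p) = k)`. -/
noncomputable def binomPMF (M : ℕ) (p : ℝ) (k : ℕ) : ℝ :=
  (M.choose k : ℝ) * p ^ k * (1 - p) ^ (M - k)

lemma binomPMF_pos {M : ℕ} {p : ℝ} (hp : 0 < p) (hp1 : p < 1) {k : ℕ} (hk : k ≤ M) :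
    0 < binomPMF M p k := by
  unfold binomPMF
  have hchoose : (0 : ℝ) < M.choose k := mod_cast Nat.choose_pos hk
  have hq : 0 < 1 - p := sub_pos.mpr hp1
  positivity

lemma sum_range_sub_mem_Icc_of_mem_Icc {f : ℕ → ℝ} {k : ℕ} {α : ℝ}
    (hα : α ∈ Set.Icc (∑ j ∈ Finset.range k, f j) (∑ j ∈ Finset.range (k + 1), f j)) :
    (∑ j ∈ Finset.range k, f j) - α ∈ Set.Icc (-f k) 0 := by
  rw [Finset.sum_range_succ] at hα
  obtain ⟨hlo, hhi⟩ := hα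
  constructor <;> linarith

lemma div_mul_lt_add_div_mul {a b c d : ℝ} (ha : 0 < a) (hb : 0 < b) (hd : 0 < d)
    (hc : c ∈ Set.Icc (-d) 0) :
    a / d * c < b + b / d * c := by
  obtain ⟨hlo, hhi⟩ := hc
  have hdiff : b + b / d * c - a / d * c = ((d + c) * b + -c * a) / d := by
    field_simp
    ring
  have hnum : 0 < (d + c) * b + -c * a := by
    rcases hlo.lt_or_eq with hlt | heq
    · nlinarith [mul_pos (neg_lt_iff_pos_add.mp hlt) hb]
    · subst heq
      nlinarith
  have : 0 < b + b / d * c - a / d * c := hdiff ▸ div_pos hnum hd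
  linarith

theorem stmt14_general (M : ℕ) (p : ℝ) (hp : 0 < p) (hp1 : p < 1)
    (Δ k : ℕ) (hk : k + Δ + 1 ≤ M)
    (α : ℝ)
    (hα : α ∈ Set.Icc (∑ j ∈ Finset.range k, binomPMF M p j)
        (∑ j ∈ Finset.range (k + 1), binomPMF M p j)) :
    (∑ j ∈ Finset.Icc (k + Δ + 1) M, binomPMF M p j)
      + binomPMF M p (k + Δ + 1) / binomPMF M p k
        * ((∑ j ∈ Finset.range k, binomPMF M p j) - α)
    < (∑ j ∈ Finset.Icc (k + Δ) M, binomPMF M p j)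
      + binomPMF M p (k + Δ) / binomPMF M p k
        * ((∑ j ∈ Finset.range k, binomPMF M p j) - α) := by
  have htail : ∑ j ∈ Finset.Icc (k + Δ) M, binomPMF M p j
      = binomPMF M p (k + Δ) + ∑ j ∈ Finset.Icc (k + Δ + 1) M, binomPMF M p j := by
    rw [Finset.Icc_add_one_left_eq_Ioc, Finset.add_sum_Ioc_eq_sum_Icc (by omega)]
  have hstep := div_mul_lt_add_div_mul (binomPMF_pos hp hp1 hk)
    (binomPMF_pos hp hp1 (by omega : k + Δ ≤ M)) (binomPMF_pos hp hp1 (by omega : k ≤ M))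
    (sum_range_sub_mem_Icc_of_mem_Icc hα)
  rw [htail]
  linarith

theorem stmt14 (M l : ℕ) (p : ℝ) (hp : 0 < p) (hp1 : p < 1) (hl : 0 < l) (hlM : l ≤ M)
    (Δ k : ℕ) (hΔ : 1 ≤ Δ) (hΔl : Δ < l) (hk : k + Δ + 1 ≤ M)
    (α : ℝ)
    (hα : α ∈ Set.Icc (∑ j ∈ Finset.range k, binomPMF M p j)
        (∑ j ∈ Finset.range (k + 1), binomPMF M p j)) :
    (∑ j ∈ Finset.Icc (k + Δ + 1) M, binomPMF M p j)
      + binomPMF M p (k + Δ + 1) / binomPMF M p k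
        * ((∑ j ∈ Finset.range k, binomPMF M p j) - α)
    < (∑ j ∈ Finset.Icc (k + Δ) M, binomPMF M p j)
      + binomPMF M p (k + Δ) / binomPMF M p k
        * ((∑ j ∈ Finset.range k, binomPMF M p j) - α) :=
  stmt14_general M p hp hp1 Δ k hk α hα
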